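/- arXiv:1804.11066 — 2 statements merged into one kernel-verified Lean document; each statement's English description precedes it below -/
import Mathlib

section
/- Let W be a Heyting frame. Then for all Galois-closed X, Y, Z ∈ Gal(W): X ∩ Y ⊆ Z if and only if X ⊆ Y → Z, where Y → Z = {y ∈ W : ∀x ∈ Y, x ∘ y ∈ Z}. Consequently, Gal(W) with intersection as meet, X ∨ Y = γ(X ∪ Y) as join, and → as implication is a complete Heyting algebra. -/
def polR {α β : Type*} (R : α → β → Prop) (X : Set α) : Set β :=
  {z | ∀ x ∈ X, R x z}

def polL {α β : Type*} (R : α → β → Prop) (Z : Set β) : Set α :=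
  {x | ∀ z ∈ Z, R x z}

def gal {α β : Type*} (R : α → β → Prop) (X : Set α) : Set α :=
  polL R (polR R X)

/-- A Heyting frame `⟨W, W', R, ∘, ε, ⇒⟩`: a polarity together with a monoid
structure on `W` and a residuation map `⇒ : W × W' → W'`, validating the
structural rules of exchange, weakening and contraction. -/
structure HeytingFrame (α β : Type*) where
  R : α → β → Prop
  op : α → α → α
  eps : α
  imp : α → β → β
  op_assoc : ∀ x y z, op (op x y) z = op x (op y z)
  eps_op : ∀ x, op eps x = x
  op_eps : ∀ x, op x eps = x
  resid : ∀ x y z, R (op x y) z ↔ R y (imp x z)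
  rule_e : ∀ x y z, R (op x y) z → R (op y x) z
  rule_w : ∀ x z, R eps z → R x z
  rule_c : ∀ x z, R (op x x) z → R x z

/-- A witness that `Gal(W)` of a Heyting frame is a complete Heyting algebra
(a frame), with intersection as meet, `γ` of union as join, and
`Y → Z = {y : ∀ x ∈ Y, x ∘ y ∈ Z}` as Heyting implication. -/
structure GalFrame {α β : Type*} (H : HeytingFrame α β) where
  [inst : Order.Frame {X : Set α // X = gal H.R X}]
  le_iff : ∀ X Y : {X : Set α // X = gal H.R X}, X ≤ Y ↔ X.1 ⊆ Y.1
  inf_eq : ∀ X Y : {X : Set α // X = gal H.R X}, (X ⊓ Y).1 = X.1 ∩ Y.1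
  sup_eq : ∀ X Y : {X : Set α // X = gal H.R X}, (X ⊔ Y).1 = gal H.R (X.1 ∪ Y.1)
  himp_eq : ∀ X Y : {X : Set α // X = gal H.R X},
    (X ⇨ Y).1 = {y : α | ∀ x ∈ X.1, H.op x y ∈ Y.1}

/-!
A Galois-closed set `X = γ(X)` is an extent of the polarity, so `w ∈ X` depends only on the set
of `z` with `w R z`. Weakening and exchange make `x ∘ y` related to everything `x` or `y` is,
so closed sets absorb `∘` on either side; hence `X ∩ Y ⊆ Z` gives `X ⊆ Y → Z`. Conversely,
contraction makes `w` related to everything `w ∘ w` is, so for `w ∈ X ∩ Y` and `X ⊆ Y → Z`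
we get `w ∘ w ∈ Z` and then `w ∈ Z`. Residuation writes `Y → Z` as the lower polar of
`{x ⇒ z : x ∈ Y, z ∈ Z^▷}`, so it is again closed, and the adjunction makes the complete
lattice of closed sets a frame.
-/
section Polarity

variable {α β : Type*} (R : α → β → Prop)

abbrev Gal : Type _ := {X : Set α // X = gal R X}

theorem subset_gal (X : Set α) : X ⊆ gal R X :=
  subset_lowerPolar_upperPolar R X

theorem gal_mono : Monotone (gal R) :=
  lowerPolar_upperPolar_monotone R

theorem gal_polL (S : Set β) : gal R (polL R S) = polL R S :=
  lowerPolar_upperPolar_lowerPolar R S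

theorem gal_gal (X : Set α) : gal R (gal R X) = gal R X :=
  gal_polL R _

variable {R}

theorem mem_of_forall_rel_imp {X : Set α} (hX : X = gal R X) {x y : α}
    (hxy : ∀ z, R y z → R x z) (hy : y ∈ X) : x ∈ X := by
  rw [hX] at hy ⊢
  exact fun z hz => hxy z (hy z hz)

variable (R)

/-- The `choice` field makes meets in the lifted lattice literally intersections. -/
def galGaloisInsertion : GaloisInsertion (fun X => (⟨gal R X, (gal_gal R X).symm⟩ : Gal R))
    Subtype.val where
  gc X Y := ⟨(subset_gal R X).trans, fun h => (gal_mono R h).trans Y.2.symm.le⟩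
  le_l_u Y := subset_gal R Y.1
  choice X h := ⟨X, (h.antisymm (subset_gal R X)).symm⟩
  choice_eq X h := Subtype.ext (h.antisymm (subset_gal R X)).symm

instance : CompleteLattice (Gal R) :=
  (galGaloisInsertion R).liftCompleteLattice

end Polarity

namespace HeytingFrame

variable {α β : Type*} (H : HeytingFrame α β)

theorem rel_op_of_rel_right {x y : α} {z : β} (h : H.R y z) : H.R (H.op x y) z := by
  apply H.rule_e
  rw [H.resid]
  apply H.rule_w
  rwa [← H.resid, H.op_eps]

theorem rel_op_of_rel_left {x y : α} {z : β} (h : H.R x z) : H.R (H.op x y) z :=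
  H.rule_e _ _ _ (H.rel_op_of_rel_right h)

def galImp (Y Z : Set α) : Set α :=
  {y | ∀ x ∈ Y, H.op x y ∈ Z}

theorem galImp_eq_polL {Y Z : Set α} (hZ : Z = gal H.R Z) :
    H.galImp Y Z = polL H.R {t | ∃ x ∈ Y, ∃ z ∈ polR H.R Z, t = H.imp x z} := by
  ext y
  constructor
  · rintro hy t ⟨x, hx, z, hz, rfl⟩
    exact (H.resid x y z).1 (hz _ (hy x hx))
  · intro hy x hx
    rw [hZ]
    exact fun z hz => (H.resid x y z).2 (hy _ ⟨x, hx, z, hz, rfl⟩)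

theorem galImp_eq_gal {Y Z : Set α} (hZ : Z = gal H.R Z) :
    H.galImp Y Z = gal H.R (H.galImp Y Z) := by
  rw [H.galImp_eq_polL hZ, gal_polL]

theorem inter_subset_iff_subset_galImp {X Y Z : Set α} (hX : X = gal H.R X)
    (hY : Y = gal H.R Y) (hZ : Z = gal H.R Z) : X ∩ Y ⊆ Z ↔ X ⊆ H.galImp Y Z := by
  constructor
  · intro h y hy x hx
    exact h ⟨mem_of_forall_rel_imp hX (fun _ => H.rel_op_of_rel_right) hy,
      mem_of_forall_rel_imp hY (fun _ => H.rel_op_of_rel_left) hx⟩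
  · rintro h w ⟨hwX, hwY⟩
    exact mem_of_forall_rel_imp hZ (fun _ => H.rule_c _ _) (h hwX w hwY)

instance : Order.Frame (Gal H.R) where
  himp Y Z := ⟨H.galImp Y.1 Z.1, H.galImp_eq_gal Z.2⟩
  le_himp_iff X Y Z := (H.inter_subset_iff_subset_galImp X.2 Y.2 Z.2).symm
  compl Y := ⟨H.galImp Y.1 (⊥ : Gal H.R).1, H.galImp_eq_gal (⊥ : Gal H.R).2⟩
  himp_bot _ := rfl

end HeytingFrame

/-- In a Heyting frame, for Galois-closed `X, Y, Z`:
`X ∩ Y ⊆ Z ↔ X ⊆ Y → Z`; consequently `Gal(W)` with intersection as meet,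
`γ(X ∪ Y)` as join and `→` as implication is a complete Heyting algebra. -/
theorem stmt_10 {α β : Type*} (H : HeytingFrame α β) :
    (∀ X Y Z : Set α, X = gal H.R X → Y = gal H.R Y → Z = gal H.R Z →
      (X ∩ Y ⊆ Z ↔ X ⊆ {y : α | ∀ x ∈ Y, H.op x y ∈ Z})) ∧
    Nonempty (GalFrame H) := by
  refine ⟨fun X Y Z hX hY hZ => H.inter_subset_iff_subset_galImp hX hY hZ, ⟨?_⟩⟩
  exact
    { inst := inferInstanceAs (Order.Frame (Gal H.R))
      le_iff := fun _ _ => Iff.rfl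
      inf_eq := fun _ _ => rfl
      sup_eq := fun _ _ => rfl
      himp_eq := fun _ _ => rfl }
end

section
/- Let A be a Heyting algebra and W_A = ⟨A, A, ≤, ∧, ⊤, →⟩ the associated Heyting frame. The embedding γ : A → Gal(W_A) is a MacNeille completion: every X ∈ Gal(W_A) satisfies X = ⊔ {γ(a) : a ∈ A, γ(a) ⊆ X} and X = ⊓ {γ(a) : a ∈ A, X ⊆ γ(a)} in the complete lattice Gal(W_A). -/
/-- The Galois closure in the frame `W_A = ⟨A, A, ≤, ∧, ⊤, →⟩`. -/
def cl {A : Type*} [HeytingAlgebra A] (X : Set A) : Set A :=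
  lowerBounds (upperBounds X)

/-!
In `W_A` the closure `γ(a)` of a point is the principal downset `Iic a`, so the `γ(a) ⊆ X` are
the `Iic a` with `a ∈ X` (a closed set is a downset), whose union is already `X`; and the
`γ(a) ⊇ X` are the `Iic a` with `a` an upper bound of `X`, whose intersection is by definition
the set of lower bounds of the upper bounds of `X`, i.e. its closure `X`.
-/

open Set

section Preorder

variable {α : Type*} [Preorder α]

theorem lowerBounds_upperBounds_singleton (a : α) : lowerBounds (upperBounds {a}) = Iic a := by
  rw [upperBounds_singleton]
  exact Subset.antisymm (fun _ hx => hx le_rfl) fun _ hx _ hy => le_trans hx hy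

theorem isLowerSet_lowerBounds (s : Set α) : IsLowerSet (lowerBounds s) :=
  fun _ _ hba ha _ hc => hba.trans (ha hc)

theorem IsLowerSet.biUnion_Iic_of_Iic_subset {s : Set α} (hs : IsLowerSet s) :
    ⋃ a ∈ {a | Iic a ⊆ s}, Iic a = s :=
  Subset.antisymm (iUnion₂_subset fun _ h => h)
    fun _ hx => mem_biUnion (hs.Iic_subset hx) self_mem_Iic

theorem lowerBounds_eq_biInter_Iic (s : Set α) : lowerBounds s = ⋂ a ∈ s, Iic a := by
  ext x
  simp only [mem_lowerBounds, mem_iInter₂, mem_Iic]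

end Preorder

theorem cl_singleton {A : Type*} [HeytingAlgebra A] (a : A) : cl {a} = Iic a :=
  lowerBounds_upperBounds_singleton a

/-- The embedding `γ : A → Gal(W_A)` is a MacNeille completion: every
Galois-closed `X` is the join (in `Gal(W_A)`, i.e. the closure of the union)
of the `γ(a) ⊆ X` and the meet (the intersection) of the `γ(a) ⊇ X`. -/
theorem stmt_13 {A : Type*} [HeytingAlgebra A] (X : Set A) (hX : X = cl X) :
    X = cl (⋃ a ∈ {a : A | cl {a} ⊆ X}, cl {a}) ∧
    X = ⋂ a ∈ {a : A | X ⊆ cl {a}}, cl {a} := by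
  have hlower : IsLowerSet X := by
    rw [hX]
    exact isLowerSet_lowerBounds _
  simp only [cl_singleton]
  constructor
  · rwa [hlower.biUnion_Iic_of_Iic_subset]
  · exact hX.trans (lowerBounds_eq_biInter_Iic (upperBounds X))
end
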